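/- Let N ≥ 1, let n₁, …, n_N and m₁, …, m_N be real numbers, and define G : ℝ → ℝ by G(κ) = -κ + (1/N) · Σ_{i=1}^N n_i · tanh(m_i · κ). If (1/N) · Σ_{i=1}^N n_i · m_i > 1, then there exists κ* > 0 such that G(κ*) = 0 and G'(κ*) ≤ 0; that is, the positive fixed point can be chosen to be non-repelling (the derivative of the flow map at it is nonpositive). -/

import Mathlib

open Real Filter Topology

lemma my_abs_tanh_le_one (x : ℝ) : |Real.tanh x| ≤ 1 := by
  rw [Real.tanh_eq_sinh_div_cosh, abs_div, abs_of_pos (Real.cosh_pos x),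
    div_le_one (Real.cosh_pos x)]
  nlinarith [Real.cosh_sq_sub_sinh_sq x, abs_nonneg (Real.sinh x), sq_abs (Real.sinh x),
    Real.cosh_pos x]

lemma my_hasDerivAt_tanh (x : ℝ) : HasDerivAt Real.tanh (1 / Real.cosh x ^ 2) x := by
  have h := (Real.hasDerivAt_sinh x).div (Real.hasDerivAt_cosh x) (Real.cosh_pos x).ne'
  have heq : (fun y => Real.sinh y / Real.cosh y) = Real.tanh := by
    funext y; rw [Real.tanh_eq_sinh_div_cosh]
  rw [show (Real.sinh / Real.cosh) = Real.tanh from heq] at h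
  refine h.congr_deriv (Eq.symm ?_)
  have := Real.cosh_sq_sub_sinh_sq x
  field_simp
  ring_nf
  nlinarith [this]

lemma my_hasDerivAt_G (N : ℕ) (n m : Fin N → ℝ) (x : ℝ) :
    HasDerivAt (fun κ : ℝ => -κ + (1 / (N : ℝ)) * ∑ i, n i * Real.tanh (m i * κ))
      (-1 + (1 / (N : ℝ)) * ∑ i, n i * (m i / Real.cosh (m i * x) ^ 2)) x := by
  have hterm : ∀ i : Fin N, HasDerivAt (fun κ : ℝ => n i * Real.tanh (m i * κ))
      (n i * (m i / Real.cosh (m i * x) ^ 2)) x := by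
    intro i
    have h1 : HasDerivAt (fun κ : ℝ => m i * κ) (m i) x := by
      simpa using (hasDerivAt_id x).const_mul (m i)
    have h2 := (my_hasDerivAt_tanh (m i * x)).comp x h1
    have h3 := h2.const_mul (n i)
    refine h3.congr_deriv (Eq.symm ?_)
    ring
  have hsum := HasDerivAt.fun_sum (u := Finset.univ) (fun i _ => hterm i)
  have := ((hasDerivAt_id x).neg).add (hsum.const_mul (1 / (N : ℝ)))
  exact this

/-- **Existence of a non-repelling positive fixed point of the bistable latent flow.**
For `G(κ) = -κ + (1/N) Σ_i n_i tanh(m_i κ)`, if `(1/N) Σ_i n_i m_i > 1`, then there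
exists `κ* > 0` with `G(κ*) = 0` and `G'(κ*) ≤ 0`, i.e. the positive fixed point can
be chosen non-repelling. -/
theorem bistable_latent_flow_attractive_fixed_point
    (N : ℕ) (hN : 1 ≤ N) (n m : Fin N → ℝ)
    (hcov : 1 < (1 / (N : ℝ)) * ∑ i, n i * m i) :
    ∃ κs : ℝ, 0 < κs ∧
      (-κs + (1 / (N : ℝ)) * ∑ i, n i * Real.tanh (m i * κs) = 0) ∧
      deriv (fun κ : ℝ => -κ + (1 / (N : ℝ)) * ∑ i, n i * Real.tanh (m i * κ))
        κs ≤ 0 := by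
  set G : ℝ → ℝ := fun κ => -κ + (1 / (N : ℝ)) * ∑ i, n i * Real.tanh (m i * κ) with hGdef
  have hGderiv : ∀ x, HasDerivAt G
      (-1 + (1 / (N : ℝ)) * ∑ i, n i * (m i / Real.cosh (m i * x) ^ 2)) x :=
    my_hasDerivAt_G N n m
  have hGcont : Continuous G := by
    have : Differentiable ℝ G := fun x => (hGderiv x).differentiableAt
    exact this.continuous
  have hG0 : G 0 = 0 := by simp [hGdef]
  -- derivative at 0 is positive
  have hd0 : HasDerivAt G (-1 + (1 / (N : ℝ)) * ∑ i, n i * m i) 0 := by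
    have := hGderiv 0
    simpa [Real.cosh_zero] using this
  have hd0pos : 0 < -1 + (1 / (N : ℝ)) * ∑ i, n i * m i := by linarith
  -- generic lemma: positive derivative at a zero gives a point to the right with G > 0
  have key : ∀ x : ℝ, G x = 0 → 0 < deriv G x → ∀ M, x < M → ∃ b, x < b ∧ b < M ∧ 0 < G b := by
    intro x hx hdx M hxM
    have hhd : HasDerivAt G (deriv G x) x := (hGderiv x).differentiableAt.hasDerivAt
    have hslope := hasDerivAt_iff_tendsto_slope.mp hhd
    have hev : ∀ᶠ y in 𝓝[>] x, 0 < slope G x y := by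
      have : ∀ᶠ y in 𝓝[≠] x, 0 < slope G x y :=
        hslope.eventually (eventually_gt_nhds hdx)
      exact this.filter_mono (nhdsWithin_mono x fun y hy => ne_of_gt hy)
    have hev2 : ∀ᶠ y in 𝓝[>] x, y < M := by
      have : Set.Iio M ∈ 𝓝[>] x := nhdsWithin_le_nhds (Iio_mem_nhds hxM)
      exact this
    obtain ⟨b, hb1, hb2⟩ := ((hev.and hev2).and self_mem_nhdsWithin).exists
    refine ⟨b, hb2, hb1.2, ?_⟩
    have hbx : x < b := hb2
    have := hb1.1
    rw [slope_def_field, hx] at this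
    have hpos : 0 < (G b - 0) / (b - x) := by simpa [div_eq_iff] using this
    have := mul_pos hpos (sub_pos.mpr hbx)
    calc (0:ℝ) < (G b - 0) / (b - x) * (b - x) := this
      _ = G b := by rw [sub_zero, div_mul_cancel₀ _ (sub_ne_zero.mpr hbx.ne')]
  -- get a > 0 with G a > 0
  have hderiv0 : deriv G 0 = -1 + (1 / (N : ℝ)) * ∑ i, n i * m i := hd0.deriv
  obtain ⟨a, ha0, _, haG⟩ := key 0 hG0 (by rw [hderiv0]; exact hd0pos) 1 one_pos
  -- choose M large with G M < 0
  set B : ℝ := (1 / (N : ℝ)) * ∑ i, |n i| with hBdef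
  set M : ℝ := max (a + 1) (B + 1) with hMdef
  have hNpos : (0:ℝ) < N := by exact_mod_cast hN
  have hBnonneg : 0 ≤ B := by
    apply mul_nonneg (by positivity)
    exact Finset.sum_nonneg fun i _ => abs_nonneg _
  have hGM : G M < 0 := by
    have hbound : (1 / (N : ℝ)) * ∑ i, n i * Real.tanh (m i * M) ≤ B := by
      apply mul_le_mul_of_nonneg_left _ (by positivity)
      apply Finset.sum_le_sum
      intro i _
      calc n i * Real.tanh (m i * M) ≤ |n i * Real.tanh (m i * M)| := le_abs_self _
        _ = |n i| * |Real.tanh (m i * M)| := abs_mul _ _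
        _ ≤ |n i| * 1 := mul_le_mul_of_nonneg_left (my_abs_tanh_le_one _) (abs_nonneg _)
        _ = |n i| := mul_one _
    have hMB : B + 1 ≤ M := le_max_right _ _
    have : G M ≤ -M + B := by simp only [hGdef]; linarith
    linarith
  have haM : a < M := lt_of_lt_of_le (by linarith) (le_max_left _ _)
  -- zero set on [a, M]
  set Z : Set ℝ := {κ | κ ∈ Set.Icc a M ∧ G κ = 0} with hZdef
  have hZne : Z.Nonempty := by
    have hIVT := intermediate_value_Icc' haM.le (hGcont.continuousOn (s := Set.Icc a M))
    have h0mem : (0:ℝ) ∈ Set.Icc (G M) (G a) := ⟨hGM.le, haG.le⟩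
    obtain ⟨z, hz1, hz2⟩ := hIVT h0mem
    exact ⟨z, hz1, hz2⟩
  have hZclosed : IsClosed Z := by
    have : Z = Set.Icc a M ∩ G ⁻¹' {0} := by
      ext x; simp [hZdef, Set.mem_inter_iff]
    rw [this]
    exact isClosed_Icc.inter (isClosed_singleton.preimage hGcont)
  have hZbdd : BddAbove Z := ⟨M, fun x hx => hx.1.2⟩
  set κs := sSup Z with hks
  have hksmem : κs ∈ Z := hZclosed.csSup_mem hZne hZbdd
  have hksa : a ≤ κs := hksmem.1.1
  have hkspos : 0 < κs := lt_of_lt_of_le ha0 hksa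
  have hksG : G κs = 0 := hksmem.2
  have hksM : κs < M := lt_of_le_of_ne hksmem.1.2 (fun h => by rw [h] at hksG; linarith)
  refine ⟨κs, hkspos, hksG, ?_⟩
  by_contra hpos
  push_neg at hpos
  obtain ⟨b, hb1, hb2, hb3⟩ := key κs hksG hpos M hksM
  -- IVT on [b, M] gives a zero above κs
  have hIVT := intermediate_value_Icc' hb2.le (hGcont.continuousOn (s := Set.Icc b M))
  obtain ⟨z, hz1, hz2⟩ := hIVT (⟨hGM.le, hb3.le⟩ : (0:ℝ) ∈ Set.Icc (G M) (G b))
  have hzZ : z ∈ Z := ⟨⟨le_trans hksa (le_trans hb1.le hz1.1), hz1.2⟩, hz2⟩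
  have : z ≤ κs := le_csSup hZbdd hzZ
  linarith [lt_of_lt_of_le hb1 hz1.1]
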